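/- arXiv:math/0512427 — 2 statements merged into one kernel-verified Lean document; each statement's English description precedes it below -/
import Mathlib

section
/- Let p ≠ 2 be a prime. Let ξ₁, ξ₂, … be independent {0,1}-valued Bernoulli(1/2) random variables on the sample space Ω₂ = {0,1}^∞ with the uniform cylinder measure, and let S_n = ξ₁ + ⋯ + ξ_n. For m ∈ {0, 1, …, p^s − 1}, r ∈ {0, …, m}, and l ≥ s, as n → m in the p-adic topology, the (rational-valued, viewed in ℚ_p) probabilities P(S_n ≡ r mod p^l) = 2^{-n} Σ_{j ≡ r mod p^l, 0 ≤ j ≤ n} C(n, j) converge in ℚ_p to C(m, r)/2^m. -/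
/-!
Let `X` generate the group ring `ℤ[ℤ/p^l]`, so that the coefficient of `(1 + X)^n` at `r` is
`∑_{j ≡ r} C(n, j)`. As `X^(p^l) = 1`, we get `(1 + X)^(p^l) ≡ 1 + X^(p^l) = 2 ≡ 2^(p^l)`
modulo `p`, and lifting the exponent gives `(1 + X)^b ≡ 2^b` modulo `p^(e+1)` whenever
`p^(l+e) ∣ b`.
If `n` is `p`-adically within `p^-(l+e)` of `m < p^l`, then `n = m + b` with such a `b`, and
`(1 + X)^n = (1 + X)^m (1 + X)^b` has coefficient `≡ 2^b C(m, r)` at `r` (no wrap-around occurs in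
`(1 + X)^m`). Dividing by the `p`-adic unit `2^n` gives the claim.
-/

open Filter Topology Finset

theorem prime_dvd_one_add_pow_sub_two_pow {A : Type*} [CommRing A] {p : ℕ} (hp : p.Prime)
    {x : A} {l : ℕ} (hx : x ^ p ^ l = 1) : (p : A) ∣ (1 + x) ^ p ^ l - 2 ^ p ^ l := by
  obtain ⟨a, ha⟩ := exists_add_pow_prime_pow_eq hp 1 x l
  obtain ⟨b, hb⟩ := exists_add_pow_prime_pow_eq hp (1 : A) 1 l
  rw [ha, ← one_add_one_eq_two, hb, hx]
  exact ⟨x * a - b, by ring⟩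

theorem prime_pow_succ_dvd_one_add_pow_sub_two_pow {A : Type*} [CommRing A] {p : ℕ}
    (hp : p.Prime) {x : A} {l : ℕ} (hx : x ^ p ^ l = 1) (e k : ℕ) :
    (p : A) ^ (e + 1) ∣ (1 + x) ^ (p ^ (l + e) * k) - 2 ^ (p ^ (l + e) * k) := by
  rw [pow_add p l e]
  simp only [pow_mul]
  exact (dvd_sub_pow_of_dvd_sub (prime_dvd_one_add_pow_sub_two_pow hp hx) e).trans
    (sub_dvd_pow_sub_pow _ _ k)

namespace AddMonoidAlgebra

theorem intCast_dvd_coeff {G : Type*} [AddMonoid G] {c : ℤ} {f : AddMonoidAlgebra ℤ G}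
    (h : (c : AddMonoidAlgebra ℤ G) ∣ f) (g : G) : c ∣ f.coeff g := by
  obtain ⟨f', rfl⟩ := h
  exact ⟨f'.coeff g, by rw [← zsmul_eq_mul, coeff_smul_apply, smul_eq_mul]⟩

theorem coeff_natCast_mul {R G : Type*} [Semiring R] [AddMonoid G] (c : ℕ)
    (f : AddMonoidAlgebra R G) (g : G) :
    ((c : AddMonoidAlgebra R G) * f).coeff g = c * f.coeff g := by
  rw [← nsmul_eq_mul, coeff_smul_apply, nsmul_eq_mul]

theorem coeff_one_add_of'_pow {q : ℕ} (n r : ℕ) (hr : r < q) :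
    ((1 + of' ℤ (ZMod q) 1) ^ n).coeff r =
      ∑ j ∈ range (n + 1), if j % q = r then (n.choose j : ℤ) else 0 := by
  rw [add_comm, add_pow, coeff_sum, Finsupp.finsetSum_apply]
  refine Finset.sum_congr rfl fun j _ => ?_
  rw [one_pow, mul_one, of'_apply, single_pow, one_pow, natCast_def,
    single_mul_single, add_zero, one_mul, coeff_single, Finsupp.single_apply, nsmul_one]
  simp only [ZMod.natCast_eq_natCast_iff', Nat.mod_eq_of_lt hr]

theorem coeff_one_add_of'_pow_of_lt {q n r : ℕ} (hn : n < q) (hr : r ≤ n) :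
    ((1 + of' ℤ (ZMod q) 1) ^ n).coeff r = n.choose r := by
  rw [coeff_one_add_of'_pow n r (hr.trans_lt hn)]
  have hj : ∀ j ∈ range (n + 1), j % q = j := fun j hj =>
    Nat.mod_eq_of_lt ((Nat.lt_succ_iff.mp (mem_range.mp hj)).trans_lt hn)
  rw [Finset.sum_congr rfl fun j hj' => by rw [hj j hj'], Finset.sum_ite_eq',
    if_pos (mem_range.mpr (Nat.lt_succ_of_le hr))]

theorem prime_pow_succ_dvd_coeff_one_add_of'_pow_sub {p : ℕ} (hp : p.Prime) {l m r e b : ℕ}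
    (hm : m < p ^ l) (hr : r ≤ m) (hb : p ^ (l + e) ∣ b) :
    (p : ℤ) ^ (e + 1) ∣
      ((1 + of' ℤ (ZMod (p ^ l)) 1) ^ (m + b)).coeff r - m.choose r * 2 ^ b := by
  obtain ⟨k, rfl⟩ := hb
  have hX : of' ℤ (ZMod (p ^ l)) 1 ^ p ^ l = 1 := by
    rw [of'_apply, single_pow, one_pow, nsmul_one, ZMod.natCast_self, one_def]
  have h := (prime_pow_succ_dvd_one_add_pow_sub_two_pow hp hX e k).mul_left
    ((1 + of' ℤ (ZMod (p ^ l)) 1) ^ m)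
  rw [mul_sub, ← pow_add, mul_comm _ (2 ^ _)] at h
  have hcoeff := intCast_dvd_coeff (G := ZMod (p ^ l)) (c := (p : ℤ) ^ (e + 1))
    (by exact_mod_cast h) r
  rw [coeff_sub, Finsupp.sub_apply, coeff_natCast_mul, coeff_one_add_of'_pow_of_lt hm hr]
    at hcoeff
  push_cast at hcoeff
  rwa [mul_comm (2 ^ _ : ℤ)] at hcoeff

end AddMonoidAlgebra

namespace Padic

variable {p : ℕ} [Fact p.Prime]

theorem norm_two (hp2 : p ≠ 2) : ‖(2 : ℚ_[p])‖ = 1 := by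
  simpa using norm_natCast_eq_one_iff.mpr ((Nat.coprime_primes Fact.out Nat.prime_two).mpr hp2)

theorem norm_div_two_pow_sub_div_two_pow_le (hp2 : p ≠ 2) {x y : ℤ} {a b k : ℕ}
    (h : (p : ℤ) ^ k ∣ x - y * 2 ^ b) :
    ‖(x : ℚ_[p]) / 2 ^ (a + b) - y / 2 ^ a‖ ≤ (p : ℝ)⁻¹ ^ k := by
  have hx : (x : ℚ_[p]) / 2 ^ (a + b) - y / 2 ^ a =
      ((x - y * 2 ^ b : ℤ) : ℚ_[p]) / 2 ^ (a + b) := by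
    push_cast
    field_simp
    ring
  rw [hx, norm_div, norm_pow, norm_two hp2, one_pow, div_one, inv_pow, ← zpow_natCast,
    ← zpow_neg]
  exact (norm_int_le_pow_iff_dvd _ _).mpr h

theorem exists_eq_add_dvd_of_norm_natCast_sub_le {m n t : ℕ} (hm : m < p ^ t)
    (h : ‖(n : ℚ_[p]) - m‖ ≤ (p : ℝ)⁻¹ ^ t) : ∃ b, p ^ t ∣ b ∧ n = m + b := by
  have hdvd : (p : ℤ) ^ t ∣ (n : ℤ) - m := by
    refine (norm_int_le_pow_iff_dvd _ _).mp ?_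
    rwa [zpow_neg, zpow_natCast, ← inv_pow, Int.cast_sub, Int.cast_natCast, Int.cast_natCast]
  have hmn : m ≤ n := by
    by_contra! hnm
    have := Int.le_of_dvd (by omega) (dvd_neg.mpr hdvd)
    have : ((p ^ t : ℕ) : ℤ) ≤ m - n := by push_cast; linarith
    omega
  refine ⟨n - m, ?_, by omega⟩
  exact Int.natCast_dvd_natCast.mp (by push_cast [hmn]; exact hdvd)

end Padic

theorem padic_combinatorial_asymptotics_general (p : ℕ) [Fact p.Prime] (hp2 : p ≠ 2)
    (s : ℕ) (m : ℕ) (hm : m < p ^ s) (r : ℕ) (hr : r ≤ m)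
    (l : ℕ) (hl : s ≤ l) (N : ℕ → ℕ)
    (hN : Tendsto (fun k => ((N k : ℚ_[p]))) atTop (𝓝 ((m : ℚ_[p])))) :
    Tendsto
      (fun k =>
        ((((∑ j ∈ Finset.range (N k + 1),
              if j % p ^ l = r then (Nat.choose (N k) j : ℚ) else 0) / 2 ^ (N k)) : ℚ) : ℚ_[p]))
      atTop (𝓝 ((Nat.choose m r : ℚ_[p]) / 2 ^ m)) := by
  have hp : p.Prime := Fact.out
  have hml : m < p ^ l := hm.trans_le (Nat.pow_le_pow_right hp.pos hl)
  have hprob : ∀ n, ((((∑ j ∈ range (n + 1), if j % p ^ l = r then (n.choose j : ℚ) else 0)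
      / 2 ^ n) : ℚ) : ℚ_[p]) =
      (((1 + AddMonoidAlgebra.of' ℤ (ZMod (p ^ l)) 1) ^ n).coeff r : ℚ_[p]) / 2 ^ n := by
    intro n
    rw [AddMonoidAlgebra.coeff_one_add_of'_pow n r (hr.trans_lt hml)]
    push_cast [apply_ite]
    rfl
  have hbasis (x : ℚ_[p]) := Metric.nhds_basis_closedBall_pow (x := x) (r := (p : ℝ)⁻¹)
    (inv_pos.mpr (by exact_mod_cast hp.pos))
    (inv_lt_one_of_one_lt₀ (by exact_mod_cast hp.one_lt))
  refine (hbasis _).tendsto_right_iff.mpr fun e _ => ?_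
  filter_upwards [(hbasis _).tendsto_right_iff.mp hN (l + e) trivial] with k hk
  rw [Metric.mem_closedBall, dist_eq_norm] at hk ⊢
  obtain ⟨b, hb, hNk⟩ := Padic.exists_eq_add_dvd_of_norm_natCast_sub_le
    (hml.trans_le (Nat.pow_le_pow_right hp.pos (l.le_add_right e))) hk
  rw [hprob, hNk]
  simpa only [Int.cast_natCast] using Padic.norm_div_two_pow_sub_div_two_pow_le hp2
    ((pow_dvd_pow _ e.le_succ).trans
      (AddMonoidAlgebra.prime_pow_succ_dvd_coeff_one_add_of'_pow_sub hp hml hr hb))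

/-- Theorem 3.1: p-adic asymptotics of combinatorial probabilities.
`P(S_n ∈ U_{1/p^l}(r)) = 2^{-n} ∑_{j ≤ n, j ≡ r mod p^l} C(n,j)`, viewed in `ℚ_p`,
converges to `C(m,r)/2^m` as `n → m` in the `p`-adic topology. -/
theorem padic_combinatorial_asymptotics (p : ℕ) [Fact p.Prime] (hp2 : p ≠ 2)
    (s : ℕ) (hs : 1 ≤ s) (m : ℕ) (hm : m < p ^ s) (r : ℕ) (hr : r ≤ m)
    (l : ℕ) (hl : s ≤ l) (N : ℕ → ℕ)
    (hN : Tendsto (fun k => ((N k : ℚ_[p]))) atTop (𝓝 ((m : ℚ_[p])))) :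
    Tendsto
      (fun k =>
        ((((∑ j ∈ Finset.range (N k + 1),
              if j % p ^ l = r then (Nat.choose (N k) j : ℚ) else 0) / 2 ^ (N k)) : ℚ) : ℚ_[p]))
      atTop (𝓝 ((Nat.choose m r : ℚ_[p]) / 2 ^ m)) :=
  padic_combinatorial_asymptotics_general p hp2 s m hm r hr l hl N hN
end

section
/- Let p ≠ 2 be a prime and let N_k be a sequence of natural numbers converging to 1 in ℚ_p. Then the rational numbers P(p divides S_{N_k}) = 2^{-N_k} · #{ω ∈ {0,1}^{N_k} : p | (ω₁ + ⋯ + ω_{N_k})} converge in ℚ_p to 1/2, and likewise P(p does not divide S_{N_k}) converges in ℚ_p to 1/2. -/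
/-!
Count inside the group ring `ℤ[ℤ/p]` with generator `g`: the coefficient of the identity in `(1 + g)ⁿ` is
`∑_{p ∣ j} (n choose j) = 2ⁿ · P(p ∣ Sₙ)`. Since `gᵖ = 1`, `(1 + g)ᵖ ≡ 1 + gᵖ = 2 ≡ 2ᵖ (mod p)`,
hence `(1 + g)^(pᵐ) ≡ 2^(pᵐ) (mod pᵐ)`. For `n = pᵐ s + 1` this gives
`∑_{p ∣ j} (n choose j) ≡ 2ⁿ⁻¹ (mod pᵐ)`, and as `2` is a `p`-adic unit,
`|P(p ∣ Sₙ) - 1/2|_p ≤ p⁻ᵐ`. Finally `N k → 1` in `ℚ_p` means `N k ≡ 1 (mod pᵐ)` eventually.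
-/

open Filter Topology Finset

def multipleChooseSum (m n : ℕ) : ℕ :=
  ∑ j ∈ range (n + 1), if m ∣ j then n.choose j else 0

theorem AddMonoidAlgebra.coeff_zero_one_add_single_one_pow (m n : ℕ) :
    ((1 + single (1 : ZMod m) (1 : ℤ)) ^ n).coeff 0 = multipleChooseSum m n := by
  rw [add_comm, add_pow, coeff_sum, Finsupp.finsetSum_apply, multipleChooseSum, Nat.cast_sum]
  refine sum_congr rfl fun j _ => ?_
  simp [single_pow, natCast_def, single_mul_single, coeff_single, Finsupp.single_apply,
    ZMod.natCast_eq_zero_iff]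

theorem prime_pow_dvd_one_add_pow_sub_two_pow {R : Type*} [CommRing R] {p : ℕ} (hp : p.Prime)
    {x : R} (hx : x ^ p = 1) (m : ℕ) : (p : R) ^ m ∣ (1 + x) ^ p ^ m - 2 ^ p ^ m := by
  have hbase : (p : R) ∣ (1 + x) ^ p - 2 ^ p := by
    obtain ⟨r, hr⟩ := exists_add_pow_prime_eq hp (1 : R) x
    have hfermat : (p : ℤ) ∣ 2 - 2 ^ p := by
      have := Fact.mk hp
      rw [← ZMod.intCast_zmod_eq_zero_iff_dvd]
      push_cast [ZMod.pow_card]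
      ring
    obtain ⟨c, hc⟩ := hfermat
    have hc' : (2 : R) - 2 ^ p = p * c := by exact_mod_cast congrArg (Int.cast : ℤ → R) hc
    refine ⟨x * r + c, ?_⟩
    rw [hr, one_pow, hx]
    linear_combination hc'
  cases m with
  | zero => simp
  | succ k =>
    simpa only [← pow_mul, ← pow_succ'] using dvd_sub_pow_of_dvd_sub hbase k

open AddMonoidAlgebra in
theorem prime_pow_dvd_multipleChooseSum_sub {p : ℕ} [Fact p.Prime] (m s : ℕ) :
    (p : ℤ) ^ m ∣ multipleChooseSum p (p ^ m * s + 1) - 2 ^ (p ^ m * s) := by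
  set g := single (1 : ZMod p) (1 : ℤ)
  have hg : g ^ p = 1 := by simp [g, single_pow, one_def]
  obtain ⟨y, hy⟩ : (p : AddMonoidAlgebra ℤ (ZMod p)) ^ m ∣
      (1 + g) ^ (p ^ m * s + 1) - 2 ^ (p ^ m * s) * (1 + g) := by
    have h := (prime_pow_dvd_one_add_pow_sub_two_pow Fact.out hg m).trans
      (sub_dvd_pow_sub_pow _ _ s)
    rw [← pow_mul, ← pow_mul] at h
    simpa only [pow_succ, sub_mul] using h.mul_right (1 + g)
  refine ⟨y.coeff 0, ?_⟩
  simpa [g, ← coeff_zero_one_add_single_one_pow, natCast_def, ofNat_def, single_pow,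
    coeff_single_zero_mul, one_def, coeff_single, Finsupp.single_apply] using
    congrArg (fun z => z.coeff 0) hy

theorem Padic.norm_two_eq_one {p : ℕ} [Fact p.Prime] (hp2 : p ≠ 2) : ‖(2 : ℚ_[p])‖ = 1 := by
  simpa using norm_natCast_eq_one_iff.2 ((Nat.coprime_primes Fact.out Nat.prime_two).2 hp2)

theorem norm_multipleChooseSum_div_sub_half_le {p : ℕ} [Fact p.Prime] (hp2 : p ≠ 2) (m s : ℕ) :
    ‖((multipleChooseSum p (p ^ m * s + 1) / 2 ^ (p ^ m * s + 1) : ℚ) : ℚ_[p]) - 1 / 2‖ ≤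
      (p : ℝ) ^ (-m : ℤ) := by
  set D : ℤ := multipleChooseSum p (p ^ m * s + 1) - 2 ^ (p ^ m * s) with hD
  calc ‖((multipleChooseSum p (p ^ m * s + 1) / 2 ^ (p ^ m * s + 1) : ℚ) : ℚ_[p]) - 1 / 2‖
      = ‖(D : ℚ_[p]) / 2 ^ (p ^ m * s + 1)‖ := by
        congr 1
        push_cast [hD]
        field_simp
        ring
    _ = ‖(D : ℚ_[p])‖ := by rw [norm_div, norm_pow, Padic.norm_two_eq_one hp2, one_pow, div_one]
    _ ≤ (p : ℝ) ^ (-m : ℤ) :=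
      (Padic.norm_int_le_pow_iff_dvd _ m).2 (prime_pow_dvd_multipleChooseSum_sub m s)

theorem exists_eq_prime_pow_mul_add_one {p : ℕ} [Fact p.Prime] {n m : ℕ} (hm : m ≠ 0)
    (h : ‖(n : ℚ_[p]) - 1‖ ≤ (p : ℝ) ^ (-m : ℤ)) : ∃ s, n = p ^ m * s + 1 := by
  have hdvd : (p : ℤ) ^ m ∣ n - 1 := by
    rw [← Padic.norm_int_le_pow_iff_dvd]
    simpa using h
  obtain ⟨n, rfl⟩ : ∃ n', n = n' + 1 := by
    refine Nat.exists_eq_add_one.2 (Nat.pos_of_ne_zero ?_)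
    rintro rfl
    have hone := Int.eq_one_of_dvd_one (pow_nonneg (Int.natCast_nonneg p) m) (by simpa using hdvd)
    have hp1 := (pow_eq_one_iff_of_nonneg (Int.natCast_nonneg p) hm).1 hone
    exact (Fact.out : p.Prime).one_lt.ne' (by exact_mod_cast hp1)
  obtain ⟨s, hs⟩ : p ^ m ∣ n := by exact_mod_cast (by simpa using hdvd : (p : ℤ) ^ m ∣ n)
  exact ⟨s, by rw [hs]⟩

theorem tendsto_multipleChooseSum_div_two_pow {p : ℕ} [Fact p.Prime] (hp2 : p ≠ 2) {N : ℕ → ℕ}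
    (hN : Tendsto (fun k => (N k : ℚ_[p])) atTop (𝓝 1)) :
    Tendsto (fun k => ((multipleChooseSum p (N k) / 2 ^ N k : ℚ) : ℚ_[p])) atTop (𝓝 (1 / 2)) := by
  rw [Metric.tendsto_atTop]
  intro ε hε
  obtain ⟨m, hm⟩ := PadicInt.exists_pow_neg_lt p hε
  have hm' : (p : ℝ) ^ (-(m + 1 : ℕ) : ℤ) < ε := by
    refine lt_of_le_of_lt (zpow_le_zpow_right₀ ?_ (by omega)) hm
    exact_mod_cast (Fact.out : p.Prime).one_le
  obtain ⟨K, hK⟩ := Metric.tendsto_atTop.1 hN ((p : ℝ) ^ (-(m + 1 : ℕ) : ℤ))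
    (zpow_pos (Nat.cast_pos.2 (Fact.out : p.Prime).pos) _)
  refine ⟨K, fun k hk => ?_⟩
  simp only [dist_eq_norm] at hK ⊢
  obtain ⟨s, hs⟩ := exists_eq_prime_pow_mul_add_one m.succ_ne_zero (hK k hk).le
  rw [hs]
  exact (norm_multipleChooseSum_div_sub_half_le hp2 (m + 1) s).trans_lt hm'

/-- Asymptotic p-adic symmetry between divisibility and non-divisibility of `S_n` by `p`:
both `P(p ∣ S_{N_k})` and its complement converge to `1/2` in `ℚ_p` when `N_k → 1` in `ℚ_p`. -/
theorem padic_divisibility_symmetry (p : ℕ) [Fact p.Prime] (hp2 : p ≠ 2)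
    (N : ℕ → ℕ)
    (hN : Tendsto (fun k => ((N k : ℚ_[p]))) atTop (𝓝 (1 : ℚ_[p]))) :
    Tendsto
      (fun k =>
        ((((∑ j ∈ Finset.range (N k + 1),
              if p ∣ j then (Nat.choose (N k) j : ℚ) else 0) / 2 ^ (N k)) : ℚ) : ℚ_[p]))
      atTop (𝓝 ((1 : ℚ_[p]) / 2)) ∧
    Tendsto
      (fun k =>
        (((1 - (∑ j ∈ Finset.range (N k + 1),
              if p ∣ j then (Nat.choose (N k) j : ℚ) else 0) / 2 ^ (N k)) : ℚ) : ℚ_[p]))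
      atTop (𝓝 ((1 : ℚ_[p]) / 2)) := by
  have hsum (n : ℕ) : (∑ j ∈ range (n + 1), if p ∣ j then (n.choose j : ℚ) else 0) =
      multipleChooseSum p n := by
    push_cast [multipleChooseSum]
    rfl
  have hprob := tendsto_multipleChooseSum_div_two_pow hp2 hN
  simp only [hsum, Rat.cast_sub, Rat.cast_one]
  refine ⟨hprob, ?_⟩
  have hcompl := (tendsto_const_nhds (x := (1 : ℚ_[p]))).sub hprob
  rwa [sub_half] at hcompl
end
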